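/- Let 0 < d < s and let X, Y be independent random variables each uniformly distributed on [0,s]. If 2d ≤ s, then for every r with 0 < r < d/s the diversified position ν = (1−r)X + rY satisfies P(ν < d) ≤ P(X < d); that is, diversification does not increase the individual probability of default. (Part (i) of Proposition 1.) -/

import Mathlib

open MeasureTheory ProbabilityTheory Set

/-- The uniform probability distribution on the interval `[0, s]`. -/
noncomputable def uniformOnIcc (s : ℝ) : Measure ℝ :=
  (ENNReal.ofReal s)⁻¹ • (volume.restrict (Icc (0 : ℝ) s))

/-!
Conditionally on `Y = y`, the bank defaults iff `X < (d - r y) / (1 - r)`. Since `r s < d` and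
`2 d ≤ s`, this threshold lies in `[0, s]` for every `y ∈ [0, s]`, so the conditional default
probability `(d - r y) / ((1 - r) s)` is affine in `y`. Its expectation is its value at the mean
`E Y = s / 2`, and `(d - r s / 2) / ((1 - r) s) ≤ d / s` is again `2 d ≤ s`.
-/

lemma uniformOnIcc_eq_cond (s : ℝ) : uniformOnIcc s = volume[|Icc 0 s] := by
  rw [uniformOnIcc, ProbabilityTheory.cond, Real.volume_Icc, sub_zero]

lemma isProbabilityMeasure_uniformOnIcc {s : ℝ} (hs : 0 < s) :
    IsProbabilityMeasure (uniformOnIcc s) := by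
  rw [uniformOnIcc_eq_cond]
  exact cond_isProbabilityMeasure_of_finite (by simp [hs]) (by simp)

lemma ae_uniformOnIcc_of_forall_mem_Icc {s : ℝ} {p : ℝ → Prop} (h : ∀ y ∈ Icc 0 s, p y) :
    ∀ᵐ y ∂uniformOnIcc s, p y :=
  Measure.ae_smul_measure ((ae_restrict_iff' measurableSet_Icc).mpr (ae_of_all _ h)) _

lemma Continuous.integrable_uniformOnIcc {f : ℝ → ℝ} (hf : Continuous f) {s : ℝ} (hs : 0 < s) :
    Integrable f (uniformOnIcc s) :=
  hf.integrableOn_Icc.smul_measure (by simpa using hs)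

lemma uniformOnIcc_Iio {s t : ℝ} (hs : 0 < s) (hts : t ≤ s) :
    uniformOnIcc s (Iio t) = ENNReal.ofReal (t / s) := by
  have hinter : Icc 0 s ∩ Iio t = Ico 0 t := by
    ext x
    simp only [mem_inter_iff, mem_Icc, mem_Iio, mem_Ico]
    grind
  rw [uniformOnIcc_eq_cond, cond_apply measurableSet_Icc, hinter, Real.volume_Icc,
    Real.volume_Ico, sub_zero, sub_zero, ENNReal.ofReal_div_of_pos hs, ENNReal.div_eq_inv_mul]

lemma uniformOnIcc_setOf_mul_add_lt {s a b t : ℝ} (hs : 0 < s) (ha : 0 < a)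
    (hts : t - b ≤ a * s) :
    uniformOnIcc s {x | a * x + b < t} = ENNReal.ofReal ((t - b) / (a * s)) := by
  have hset : {x | a * x + b < t} = Iio ((t - b) / a) := by
    ext x
    rw [mem_ofPred_eq, mem_Iio, lt_div_iff₀' ha, lt_sub_iff_add_lt]
  rw [hset, uniformOnIcc_Iio hs ((div_le_iff₀' ha).mpr hts), div_div]

lemma integral_id_uniformOnIcc {s : ℝ} (hs : 0 < s) : ∫ x, x ∂uniformOnIcc s = s / 2 := by
  rw [uniformOnIcc, integral_smul_measure, integral_Icc_eq_integral_Ioc,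
    ← intervalIntegral.integral_of_le hs.le, integral_id, ENNReal.toReal_inv,
    ENNReal.toReal_ofReal hs.le, smul_eq_mul]
  field_simp
  ring

lemma lintegral_ofReal_affine_uniformOnIcc {s : ℝ} (hs : 0 < s) (a b : ℝ)
    (hnonneg : ∀ y ∈ Icc 0 s, 0 ≤ a + b * y) :
    ∫⁻ y, ENNReal.ofReal (a + b * y) ∂uniformOnIcc s = ENNReal.ofReal (a + b * (s / 2)) := by
  have := isProbabilityMeasure_uniformOnIcc hs
  have hint : Integrable (fun y => a + b * y) (uniformOnIcc s) :=
    (by fun_prop : Continuous fun y : ℝ => a + b * y).integrable_uniformOnIcc hs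
  rw [← ofReal_integral_eq_lintegral_ofReal hint (ae_uniformOnIcc_of_forall_mem_Icc hnonneg),
    integral_add (integrable_const a) ((continuous_id'.integrable_uniformOnIcc hs).const_mul b),
    integral_const, integral_const_mul, integral_id_uniformOnIcc hs]
  simp

lemma lintegral_uniformOnIcc_setOf_mul_add_mul_lt {s a b t : ℝ} (hs : 0 < s) (ha : 0 < a)
    (hb : 0 ≤ b) (hbt : b * s ≤ t) (hta : t ≤ a * s) :
    ∫⁻ y, uniformOnIcc s {x | a * x + b * y < t} ∂uniformOnIcc s
      = ENNReal.ofReal ((t - b * (s / 2)) / (a * s)) := by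
  have hslice : ∀ y ∈ Icc 0 s, uniformOnIcc s {x | a * x + b * y < t}
      = ENNReal.ofReal (t / (a * s) + -(b / (a * s)) * y) := by
    intro y hy
    rw [uniformOnIcc_setOf_mul_add_lt hs ha (by nlinarith [hy.1])]
    congr 1
    ring
  have hnonneg : ∀ y ∈ Icc 0 s, 0 ≤ t / (a * s) + -(b / (a * s)) * y := by
    intro y hy
    rw [show t / (a * s) + -(b / (a * s)) * y = (t - b * y) / (a * s) by ring]
    exact div_nonneg (by nlinarith [hy.2]) (mul_pos ha hs).le
  rw [lintegral_congr_ae (ae_uniformOnIcc_of_forall_mem_Icc hslice),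
    lintegral_ofReal_affine_uniformOnIcc hs _ _ hnonneg]
  congr 1
  ring

lemma ProbabilityTheory.IndepFun.measure_preimage_eq_lintegral {Ω α β : Type*}
    [MeasurableSpace Ω] [MeasurableSpace α] [MeasurableSpace β] {P : Measure Ω}
    [IsFiniteMeasure P] {X : Ω → α} {Y : Ω → β} {μ : Measure α} {ν : Measure β}
    (hXY : IndepFun X Y P) (hXm : Measurable X) (hYm : Measurable Y)
    (hX : P.map X = μ) (hY : P.map Y = ν) {S : Set (α × β)} (hS : MeasurableSet S) :
    P ((fun ω => (X ω, Y ω)) ⁻¹' S) = ∫⁻ x, ν (Prod.mk x ⁻¹' S) ∂μ := by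
  rw [← Measure.map_apply (hXm.prodMk hYm) hS,
    (indepFun_iff_map_prod_eq_prod_map_map hXm.aemeasurable hYm.aemeasurable).mp hXY, hX, hY]
  have : SFinite ν := hY ▸ inferInstance
  exact Measure.prod_apply hS

/-- if `2d ≤ s`, then for every `0 < r < d/s` the diversified position
`ν = (1-r)X + rY` satisfies `P(ν < d) ≤ P(X < d)`. (Part (i) of Proposition 1.) -/
theorem diversification_reduces_individual_default_small_r
    {Ω : Type*} [MeasurableSpace Ω] (P : Measure Ω) [IsProbabilityMeasure P]
    (s d : ℝ) (hd : 0 < d) (hds : d < s)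
    (X Y : Ω → ℝ) (hXm : Measurable X) (hYm : Measurable Y)
    (hX : P.map X = uniformOnIcc s) (hY : P.map Y = uniformOnIcc s)
    (hXY : IndepFun X Y P)
    (hs : 2 * d ≤ s)
    (r : ℝ) (hr0 : 0 < r) (hr1 : r < d / s) :
    P {ω | (1 - r) * X ω + r * Y ω < d} ≤ P {ω | X ω < d} := by
  have hs0 : 0 < s := hd.trans hds
  have hrs : r * s < d := (lt_div_iff₀ hs0).mp hr1
  have hr : 0 < 1 - r := by nlinarith
  calc P {ω | (1 - r) * X ω + r * Y ω < d}
      = ∫⁻ y, uniformOnIcc s {x | (1 - r) * x + r * y < d} ∂uniformOnIcc s :=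
        hXY.symm.measure_preimage_eq_lintegral hYm hXm hY hX
          (S := {p | (1 - r) * p.2 + r * p.1 < d}) (measurableSet_lt (by fun_prop) measurable_const)
    _ = ENNReal.ofReal ((d - r * (s / 2)) / ((1 - r) * s)) :=
        lintegral_uniformOnIcc_setOf_mul_add_mul_lt hs0 hr hr0.le hrs.le (by nlinarith)
    _ ≤ ENNReal.ofReal (d / s) := by
        refine ENNReal.ofReal_le_ofReal ?_
        rw [div_le_div_iff₀ (mul_pos hr hs0) hs0]
        nlinarith [mul_le_mul_of_nonneg_left hs (mul_nonneg hr0.le hs0.le)]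
    _ = P {ω | X ω < d} := by
        rw [← uniformOnIcc_Iio hs0 hds.le, ← hX, Measure.map_apply hXm measurableSet_Iio]
        rfl
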